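/- Let Δ be a simplicial forest with the intersection property whose facets have cardinality at least 2 (i.e., dim Δ ≥ 1). Then ν(Δ) ≤ 2. -/

import Mathlib

noncomputable section

open Finset MvPolynomial

/-- A simplicial complex on the vertex type `V`: a finite, nonempty collection of
finite subsets of `V` that is closed under taking subsets. -/
structure SimplicialComplex (V : Type) [DecidableEq V] : Type where
  faces : Finset (Finset V)
  nonempty' : faces.Nonempty
  down_closed : ∀ ⦃F G : Finset V⦄, F ∈ faces → G ⊆ F → G ∈ faces

namespace SimplicialComplex

variable {V : Type} [DecidableEq V]

open scoped Classical in
/-- The facets: the maximal faces with respect to inclusion. -/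
def facets (Δ : SimplicialComplex V) : Finset (Finset V) :=
  Δ.faces.filter fun F => ∀ G ∈ Δ.faces, F ⊆ G → F = G

/-- A matching: a set of pairwise disjoint facets. -/
def IsMatching (Δ : SimplicialComplex V) (M : Finset (Finset V)) : Prop :=
  M ⊆ Δ.facets ∧ ∀ F ∈ M, ∀ G ∈ M, F ≠ G → F ∩ G = ∅

/-- The matching number `ν(Δ)`: the maximum cardinality of a matching. -/
def matchingNumber (Δ : SimplicialComplex V) : ℕ :=
  sSup {r : ℕ | ∃ M : Finset (Finset V), Δ.IsMatching M ∧ M.card = r}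

/-- `F` is a leaf of the subcomplex generated by the facet set `S`: either `F` is
the only facet, or there is another facet `G` with `H ∩ F ⊆ G ∩ F` for all
facets `H ≠ F`. -/
def IsLeafIn (S : Finset (Finset V)) (F : Finset V) : Prop :=
  F ∈ S ∧ (S = {F} ∨ ∃ G ∈ S, G ≠ F ∧ ∀ H ∈ S, H ≠ F → H ∩ F ⊆ G ∩ F)

/-- A simplicial forest: every nonempty subcomplex has a leaf (equivalently,
every connected component is a simplicial tree). -/
def IsForest (Δ : SimplicialComplex V) : Prop :=
  ∀ S ⊆ Δ.facets, S.Nonempty → ∃ F, IsLeafIn S F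

/-- Connectedness: any two facets are joined by a chain of facets in which
consecutive facets intersect nontrivially. -/
def Connected (Δ : SimplicialComplex V) : Prop :=
  ∀ F ∈ Δ.facets, ∀ G ∈ Δ.facets,
    Relation.ReflTransGen
      (fun A B => A ∈ Δ.facets ∧ B ∈ Δ.facets ∧ (A ∩ B).Nonempty) F G

/-- A simplicial tree: a connected simplicial forest. -/
def IsTree (Δ : SimplicialComplex V) : Prop := Δ.Connected ∧ Δ.IsForest

/-- A good leaf: a facet which is a leaf of every subcomplex containing it. -/
def IsGoodLeaf (Δ : SimplicialComplex V) (F : Finset V) : Prop :=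
  F ∈ Δ.facets ∧ ∀ S ⊆ Δ.facets, F ∈ S → IsLeafIn S F

/-- Two disjoint facets `F`, `G` form a gap: the induced subcomplex on `F ∪ G`
has facet set exactly `{F, G}`. -/
def FormGap (Δ : SimplicialComplex V) (F G : Finset V) : Prop :=
  F ∈ Δ.facets ∧ G ∈ Δ.facets ∧ F ∩ G = ∅ ∧
    ∀ H ∈ Δ.facets, H ⊆ F ∪ G → H = F ∨ H = G

/-- A restricted matching: a matching one of whose facets forms a gap with every
other facet of the matching. -/
def IsRestrictedMatching (Δ : SimplicialComplex V) (M : Finset (Finset V)) : Prop :=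
  Δ.IsMatching M ∧ ∃ F ∈ M, ∀ G ∈ M, G ≠ F → Δ.FormGap F G

/-- The restricted matching number `ν₀(Δ)`. -/
def restrictedMatchingNumber (Δ : SimplicialComplex V) : ℕ :=
  sSup {r : ℕ | ∃ M : Finset (Finset V), Δ.IsRestrictedMatching M ∧ M.card = r}

/-- An induced matching: a matching `M` such that the facets contained in the
union of the members of `M` are exactly the members of `M`. -/
def IsInducedMatching (Δ : SimplicialComplex V) (M : Finset (Finset V)) : Prop :=
  Δ.IsMatching M ∧ ∀ H ∈ Δ.facets, H ⊆ M.biUnion id → H ∈ M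

/-- The induced matching number `ν₁(Δ)`. -/
def inducedMatchingNumber (Δ : SimplicialComplex V) : ℕ :=
  sSup {r : ℕ | ∃ M : Finset (Finset V), Δ.IsInducedMatching M ∧ M.card = r}

/-- A proper chain of length `n` between the facets `F` and `G`. -/
def ProperChain (Δ : SimplicialComplex V) (F G : Finset V) (n : ℕ) : Prop :=
  ∃ c : ℕ → Finset V, c 0 = F ∧ c n = G ∧ (∀ i ≤ n, c i ∈ Δ.facets) ∧
    ∀ i < n, (c i ∩ c (i + 1)).card = (c (i + 1)).card - 1

/-- The distance between two facets: the minimal length of a proper chain. -/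
def dist (Δ : SimplicialComplex V) (F G : Finset V) : ℕ :=
  sInf {n : ℕ | Δ.ProperChain F G n}

/-- The intersection property for a pure complex whose facets have cardinality
`t` (`= d + 1`): it is connected in codimension 1, and any two facets `F`, `G`
with `|F ∩ G| = t - k` (`1 ≤ k ≤ t`) satisfy `dist(F, G) = k`. -/
def HasIntersectionProperty (Δ : SimplicialComplex V) (t : ℕ) : Prop :=
  (∀ F ∈ Δ.facets, F.card = t) ∧
    (∀ F ∈ Δ.facets, ∀ G ∈ Δ.facets, ∃ n, Δ.ProperChain F G n) ∧
    ∀ F ∈ Δ.facets, ∀ G ∈ Δ.facets, ∀ k, 1 ≤ k → k ≤ t →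
      (F ∩ G).card = t - k → Δ.dist F G = k

end SimplicialComplex

/-- The simplicial complex generated by a finite family of faces. -/
def ofFacets {V : Type} [DecidableEq V] (ℱ : Finset (Finset V)) :
    SimplicialComplex V where
  faces := insert ∅ (ℱ.biUnion Finset.powerset)
  nonempty' := ⟨∅, Finset.mem_insert_self _ _⟩
  down_closed := by
    intro F G hF hGF
    rcases Finset.mem_insert.mp hF with h | h
    · subst h
      exact Finset.mem_insert.mpr <| Or.inl (Finset.subset_empty.mp hGF)
    · rcases Finset.mem_biUnion.mp h with ⟨A, hA, hFA⟩
      exact Finset.mem_insert.mpr <| Or.inr <| Finset.mem_biUnion.mpr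
        ⟨A, hA, Finset.mem_powerset.mpr (hGF.trans (Finset.mem_powerset.mp hFA))⟩

/-- The ideal of `K[x_v : v ∈ V]` generated by the products
`x_{F₁} ⋯ x_{F_k}` over all `k`-matchings `{F₁, …, F_k}` taken from the facet
set `ℱ`.  For `ℱ = ℱ(Δ)` this is the `k`-th squarefree power `I(Δ)^{[k]}` of the
facet ideal `I(Δ)` (and the facet ideal itself for `k = 1`). -/
def matchPow (K : Type) [Field K] {V : Type} [DecidableEq V]
    (ℱ : Finset (Finset V)) (k : ℕ) : Ideal (MvPolynomial V K) :=
  Ideal.span {p | ∃ M : Finset (Finset V), M ⊆ ℱ ∧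
    (∀ F ∈ M, ∀ G ∈ M, F ≠ G → F ∩ G = ∅) ∧ M.card = k ∧
    p = ∏ F ∈ M, ∏ v ∈ F, (X v : MvPolynomial V K)}

/-- The `k`-th squarefree power `I(Δ)^{[k]}` of the facet ideal of `Δ`. -/
def sqfreePower (K : Type) [Field K] {V : Type} [DecidableEq V]
    (Δ : SimplicialComplex V) (k : ℕ) : Ideal (MvPolynomial V K) :=
  matchPow K Δ.facets k

/-- `p` is a monomial with coefficient `1`. -/
def IsMonomialOne {K : Type} [Field K] {V : Type} (p : MvPolynomial V K) : Prop :=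
  ∃ d : V →₀ ℕ, p = monomial d 1

/-- `u` is a minimal monomial generator of the monomial ideal `I`: `u` is a
monomial of `I` which is not strictly divisible by any monomial of `I`. -/
def IsMinGen {K : Type} [Field K] {V : Type} (I : Ideal (MvPolynomial V K))
    (u : MvPolynomial V K) : Prop :=
  IsMonomialOne u ∧ u ∈ I ∧
    ∀ v : MvPolynomial V K, IsMonomialOne v → v ∈ I → v ∣ u → v = u

/-- A monomial ideal `I` has linear quotients: its minimal monomial generators
can be listed as `f₁, …, f_m` so that each colon ideal
`(f₁, …, f_{i-1}) : (f_i)` is generated by a subset of the variables. -/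
def HasLinearQuotients {K : Type} [Field K] {V : Type}
    (I : Ideal (MvPolynomial V K)) : Prop :=
  ∃ L : List (MvPolynomial V K), L.Nodup ∧ (∀ u, u ∈ L ↔ IsMinGen I u) ∧
    ∀ i : ℕ, ∀ hi : i < L.length, 1 ≤ i →
      ∃ s : Set V,
        Submodule.colon (Ideal.span {q | q ∈ L.take i}) (Ideal.span {L.get ⟨i, hi⟩}) =
          Ideal.span ((fun v => (X v : MvPolynomial V K)) '' s)

/-- The degree of the monomial with exponent vector `d`. -/
def degOf {V : Type} (d : V →₀ ℕ) : ℕ := d.sum fun _ n => n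

/-- The edge relation of the induced graph `G_I^{(u,v)}` of Bigdeli–Herzog–Zheng,
for a monomial ideal `I` generated in degree `d`, where `m` is the exponent
vector of `lcm(u, v)`: two minimal monomial generators (identified with their
exponent vectors) dividing `lcm(u, v)` are adjacent when their lcm has degree
`d + 1`. -/
def EdgeRel (K : Type) [Field K] {V : Type} [DecidableEq V]
    (I : Ideal (MvPolynomial V K)) (d : ℕ) (m : V →₀ ℕ) (u v : V →₀ ℕ) : Prop :=
  IsMinGen I (monomial u (1 : K)) ∧ IsMinGen I (monomial v (1 : K)) ∧
    u ≤ m ∧ v ≤ m ∧ degOf (u ⊔ v) = d + 1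

/-- The combinatorial criterion of Bigdeli–Herzog–Zheng for a monomial ideal `I`
generated in degree `d` to be linearly related: any two minimal monomial
generators `u`, `v` are connected by a path in `G_I^{(u,v)}`. -/
def LinearlyRelatedVia (K : Type) [Field K] {V : Type} [DecidableEq V]
    (I : Ideal (MvPolynomial V K)) (d : ℕ) : Prop :=
  ∀ a b : V →₀ ℕ, IsMinGen I (monomial a (1 : K)) → IsMinGen I (monomial b (1 : K)) →
    Relation.ReflTransGen (EdgeRel K I d (a ⊔ b)) a b

/-- The `t`-path simplicial tree `Γ_{n,t}` of the path graph `P_n` on the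
vertices `1, …, n`: its facets are the intervals `F_i = {i, …, i + t - 1}` for
`1 ≤ i ≤ n - t + 1`. -/
def pathFacets (n t : ℕ) : Finset (Finset ℕ) :=
  (Finset.Icc 1 (n - t + 1)).image fun i => Finset.Icc i (i + t - 1)

/-- The `t`-path simplicial tree `Γ_{n,t}` of the path graph `P_n`. -/
def pathComplex (n t : ℕ) : SimplicialComplex ℕ := ofFacets (pathFacets n t)

/-!
Suppose `F₀, F₁, F₂` are pairwise disjoint facets of size `t ≥ 2`. By the intersection property,
consecutive ones are joined by proper chains of length `t`, and such a chain between disjoint facets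
must trade the vertices of one for those of the other, one vertex at a time. Going round the
triangle, every interior facet of a chain lies in the union of its two neighbours, and so does each
`F_j`, unless its two neighbours on the triangle meet it in the same `t - 1` vertices, in which case
`F_j` is skipped. The resulting family of facets has no leaf, contradicting the forest property.
-/

namespace Finset

variable {α : Type*} [DecidableEq α]

theorem card_inter_le_card_inter_add_card_sdiff (A B S : Finset α) :
    (A ∩ S).card ≤ (B ∩ S).card + (A \ B).card := by
  calc (A ∩ S).card ≤ ((A ∩ S) \ (B ∩ S)).card + (B ∩ S).card := card_le_card_sdiff_add_card
    _ ≤ (A \ B).card + (B ∩ S).card :=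
        Nat.add_le_add_right (card_le_card fun x => by simp only [mem_sdiff, mem_inter]; tauto) _
    _ = (B ∩ S).card + (A \ B).card := add_comm _ _

theorem sdiff_subset_of_card_inter_lt {A B X : Finset α} (hAB : (A \ B).card ≤ 1)
    (hlt : (B ∩ X).card < (A ∩ X).card) : A \ B ⊆ X := by
  obtain ⟨y, hyA, hyB⟩ := exists_mem_notMem_of_card_lt_card hlt
  rw [mem_inter] at hyA hyB
  have hy : y ∈ A \ B := mem_sdiff.2 ⟨hyA.1, fun h => hyB ⟨h, hyA.2⟩⟩
  intro x hx
  rw [card_le_one.1 hAB x hx y hy]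
  exact hyA.2

theorem subset_union_of_card_inter_add_one {A B F : Finset α} (hA : (A ∩ F).card + 1 = F.card)
    (hB : (B ∩ F).card + 1 = F.card) (hAB : A ∩ F ≠ B ∩ F) : F ⊆ A ∪ B := by
  intro x hx
  by_contra hxAB
  rw [mem_union, not_or] at hxAB
  have erase_eq : ∀ C, (C ∩ F).card + 1 = F.card → x ∉ C → C ∩ F = F.erase x :=
    fun C hC hxC => eq_of_subset_of_card_le
      (fun y hy => mem_erase.2 ⟨fun h => hxC (h ▸ (mem_inter.1 hy).1), (mem_inter.1 hy).2⟩)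
      (by rw [card_erase_of_mem hx]; omega)
  exact hAB ((erase_eq A hA hxAB.1).trans (erase_eq B hB hxAB.2).symm)

theorem card_inter_le_of_card_sdiff_succ_le_one {c : ℕ → Finset α} (S : Finset α) {i j : ℕ}
    (hij : i ≤ j) (hstep : ∀ k < j, (c k \ c (k + 1)).card ≤ 1) :
    (c i ∩ S).card ≤ (c j ∩ S).card + (j - i) := by
  induction j, hij using Nat.le_induction with
  | base => simp
  | succ j hij ih =>
    have hj := card_inter_le_card_inter_add_card_sdiff (c j) (c (j + 1)) S
    have := hstep j j.lt_succ_self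
    have := ih fun k hk => hstep k (hk.trans j.lt_succ_self)
    omega

theorem card_inter_le_of_card_succ_sdiff_le_one {c : ℕ → Finset α} (S : Finset α) {i j : ℕ}
    (hij : i ≤ j) (hstep : ∀ k < j, (c (k + 1) \ c k).card ≤ 1) :
    (c j ∩ S).card ≤ (c i ∩ S).card + (j - i) := by
  induction j, hij using Nat.le_induction with
  | base => simp
  | succ j hij ih =>
    have hj := card_inter_le_card_inter_add_card_sdiff (c (j + 1)) (c j) S
    have := hstep j j.lt_succ_self
    have := ih fun k hk => hstep k (hk.trans j.lt_succ_self)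
    omega

end Finset

section ExchangeChain

variable {α : Type*} [DecidableEq α]

/-- `c 0, …, c t` passes from `F` to `G` by trading one vertex of `F` for one vertex of `G` at
each step. -/
structure IsExchangeChain (F G : Finset α) (t : ℕ) (c : ℕ → Finset α) : Prop where
  subset_union : ∀ i ≤ t, c i ⊆ F ∪ G
  card_inter_left : ∀ i ≤ t, (c i ∩ F).card = t - i
  card_inter_right : ∀ i ≤ t, (c i ∩ G).card = i
  inter_left_subset : ∀ i < t, c (i + 1) ∩ F ⊆ c i
  inter_right_subset : ∀ i < t, c i ∩ G ⊆ c (i + 1)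

theorem isExchangeChain_of_card_sdiff_le_one {F G : Finset α} {t : ℕ} {c : ℕ → Finset α}
    (hFG : Disjoint F G) (h0 : c 0 = F) (ht : c t = G) (hcard : ∀ i ≤ t, (c i).card = t)
    (hdrop : ∀ i < t, (c i \ c (i + 1)).card ≤ 1) (hadd : ∀ i < t, (c (i + 1) \ c i).card ≤ 1) :
    IsExchangeChain F G t c := by
  have hF : F.card = t := h0 ▸ hcard 0 t.zero_le
  have hG : G.card = t := ht ▸ hcard t le_rfl
  have hsplit : ∀ i, (c i ∩ F).card + (c i ∩ G).card = (c i ∩ (F ∪ G)).card := fun i => by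
    rw [inter_union_distrib_left,
      card_union_of_disjoint (hFG.mono inter_subset_right inter_subset_right)]
  have hcards : ∀ i ≤ t, (c i ∩ F).card = t - i ∧ (c i ∩ G).card = i ∧
      (c i ∩ (F ∪ G)).card = (c i).card := fun i hi => by
    have hlow_F := card_inter_le_of_card_sdiff_succ_le_one F i.zero_le
      fun k hk => hdrop k (by omega)
    have hlow_G := card_inter_le_of_card_succ_sdiff_le_one G hi hadd
    have hup := card_le_card (inter_subset_left : c i ∩ (F ∪ G) ⊆ c i)
    rw [h0, inter_self, hF] at hlow_F
    rw [ht, inter_self, hG] at hlow_G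
    have := hsplit i
    have := hcard i hi
    omega
  have hleft := fun i hi => (hcards i hi).1
  have hright := fun i hi => (hcards i hi).2.1
  refine ⟨fun i hi => inter_eq_left.1 (eq_of_subset_of_card_le inter_subset_left
      (hcards i hi).2.2.ge), hleft, hright, ?_, ?_⟩
  · intro i hi x hx
    by_contra hxi
    have hsub := sdiff_subset_of_card_inter_lt (X := G) (hadd i hi)
      (by rw [hright i hi.le, hright (i + 1) hi]; omega)
    exact disjoint_left.1 hFG (mem_inter.1 hx).2 (hsub (mem_sdiff.2 ⟨(mem_inter.1 hx).1, hxi⟩))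
  · intro i hi x hx
    by_contra hxi
    have hsub := sdiff_subset_of_card_inter_lt (X := F) (hdrop i hi)
      (by rw [hleft i hi.le, hleft (i + 1) hi]; omega)
    exact disjoint_left.1 hFG (hsub (mem_sdiff.2 ⟨(mem_inter.1 hx).1, hxi⟩)) (mem_inter.1 hx).2

def PartCoveredIn (T : Finset (Finset α)) (A X : Finset α) : Prop :=
  ∃ H ∈ T, H ≠ A ∧ A ∩ X ⊆ H

def CoveredByTwo (T : Finset (Finset α)) (A : Finset α) : Prop :=
  ∃ H₁ ∈ T, ∃ H₂ ∈ T, H₁ ≠ A ∧ H₂ ≠ A ∧ A ⊆ H₁ ∪ H₂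

theorem CoveredByTwo.of_subset_union {T : Finset (Finset α)} {A X Y : Finset α}
    (hA : A ⊆ X ∪ Y) (hX : PartCoveredIn T A X) (hY : PartCoveredIn T A Y) :
    CoveredByTwo T A := by
  obtain ⟨H₁, h₁T, h₁A, h₁⟩ := hX
  obtain ⟨H₂, h₂T, h₂A, h₂⟩ := hY
  refine ⟨H₁, h₁T, H₂, h₂T, h₁A, h₂A, fun x hx => ?_⟩
  rcases mem_union.1 (hA hx) with hxX | hxY
  · exact mem_union_left _ (h₁ (mem_inter.2 ⟨hx, hxX⟩))
  · exact mem_union_right _ (h₂ (mem_inter.2 ⟨hx, hxY⟩))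

namespace IsExchangeChain

variable {E F G : Finset α} {t : ℕ} {a b c : ℕ → Finset α} {T : Finset (Finset α)}

theorem coveredByTwo (hc : IsExchangeChain F G t c) (hT : ∀ i ∈ Ioo 0 t, c i ∈ T)
    (hstart : PartCoveredIn T (c 1) F) (hend : PartCoveredIn T (c (t - 1)) G) {i : ℕ}
    (hi : i ∈ Ioo 0 t) : CoveredByTwo T (c i) := by
  obtain ⟨hi0, hit⟩ := mem_Ioo.1 hi
  have hne : ∀ j ≤ t, j ≠ i → c j ≠ c i := fun j hj hji h => hji <| by
    have := hc.card_inter_left j hj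
    rw [h, hc.card_inter_left i hit.le] at this
    omega
  refine .of_subset_union (hc.subset_union i hit.le) ?_ ?_
  · rcases (by omega : i = 1 ∨ 1 < i) with rfl | h1
    · exact hstart
    · obtain ⟨j, rfl⟩ : ∃ j, i = j + 1 := ⟨i - 1, by omega⟩
      exact ⟨c j, hT j (mem_Ioo.2 ⟨by omega, by omega⟩), hne j (by omega) (by omega),
        hc.inter_left_subset j (by omega)⟩
  · rcases (by omega : i = t - 1 ∨ i + 1 < t) with rfl | h1
    · exact hend
    · exact ⟨c (i + 1), hT _ (mem_Ioo.2 ⟨by omega, h1⟩), hne _ h1.le (by omega),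
        hc.inter_right_subset i hit⟩

theorem ne_left (hc : IsExchangeChain F G t c) (hF : F.card = t) {i : ℕ} (h0 : 0 < i)
    (hi : i ≤ t) : c i ≠ F := by
  intro h
  have := hc.card_inter_left i hi
  rw [h, inter_self, hF] at this
  omega

theorem ne_right (hc : IsExchangeChain F G t c) (hG : G.card = t) {i : ℕ} (hi : i < t) :
    c i ≠ G := by
  intro h
  have := hc.card_inter_right i hi.le
  rw [h, inter_self, hG] at this
  omega

theorem partCoveredIn_junction (ha : IsExchangeChain E F t a) (hb : IsExchangeChain F G t b)
    (ht : 2 ≤ t) (hEF : Disjoint E F) (hEG : Disjoint E G) (hF : F.card = t)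
    (haT : a (t - 1) ∈ T) (hbT : b 1 ∈ T) (hFT : a (t - 1) ∩ F ≠ b 1 ∩ F → F ∈ T) :
    PartCoveredIn T (a (t - 1)) F ∧ PartCoveredIn T (b 1) F := by
  have hab : a (t - 1) ≠ b 1 := by
    intro h
    have hE : (b 1 ∩ E).card = 1 := by
      rw [← h, ha.card_inter_left _ (by omega)]
      omega
    have : Disjoint (b 1) E :=
      (disjoint_union_left.2 ⟨hEF.symm, hEG.symm⟩).mono_left (hb.subset_union 1 (by omega))
    rw [disjoint_iff_inter_eq_empty.1 this, card_empty] at hE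
    exact zero_ne_one hE
  by_cases hgood : a (t - 1) ∩ F = b 1 ∩ F
  · exact ⟨⟨b 1, hbT, hab.symm, hgood.le.trans inter_subset_left⟩,
      ⟨a (t - 1), haT, hab, hgood.ge.trans inter_subset_left⟩⟩
  · exact ⟨⟨F, hFT hgood, (ha.ne_right hF (by omega)).symm, inter_subset_right⟩,
      ⟨F, hFT hgood, (hb.ne_left hF one_pos (by omega)).symm, inter_subset_right⟩⟩

theorem coveredByTwo_junction (ha : IsExchangeChain E F t a) (hb : IsExchangeChain F G t b)
    (ht : 2 ≤ t) (hF : F.card = t) (haT : a (t - 1) ∈ T) (hbT : b 1 ∈ T)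
    (hgood : a (t - 1) ∩ F ≠ b 1 ∩ F) : CoveredByTwo T F := by
  refine ⟨a (t - 1), haT, b 1, hbT, ha.ne_right hF (by omega),
    hb.ne_left hF one_pos (by omega), subset_union_of_card_inter_add_one ?_ ?_ hgood⟩
  · rw [ha.card_inter_right _ (by omega), hF]; omega
  · rw [hb.card_inter_left _ (by omega), hF]; omega

end IsExchangeChain

end ExchangeChain

namespace SimplicialComplex

variable {V : Type} [DecidableEq V] {Δ : SimplicialComplex V}

theorem eq_of_mem_facets_of_subset {F G : Finset V} (hF : F ∈ Δ.facets) (hG : G ∈ Δ.facets)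
    (h : F ⊆ G) : F = G := by
  simp only [facets, mem_filter] at hF hG
  exact hF.2 G hG.1 h

theorem matchingNumber_le {k : ℕ} (h : ∀ M, Δ.IsMatching M → M.card ≤ k) :
    Δ.matchingNumber ≤ k :=
  csSup_le ⟨0, ∅, ⟨empty_subset _, by simp⟩, card_empty⟩ (by rintro _ ⟨M, hM, rfl⟩; exact h M hM)

theorem IsForest.eq_empty_of_forall_coveredByTwo (hΔ : Δ.IsForest) {T : Finset (Finset V)}
    (hT : T ⊆ Δ.facets) (hcov : ∀ A ∈ T, CoveredByTwo T A) : T = ∅ := by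
  by_contra hne
  obtain ⟨F, hFT, hleaf⟩ := hΔ T hT (nonempty_iff_ne_empty.2 hne)
  obtain ⟨H₁, hH₁, H₂, hH₂, hne₁, hne₂, hsub⟩ := hcov F hFT
  rcases hleaf with hTF | ⟨G, hG, hGF, hdom⟩
  · exact hne₁ (mem_singleton.1 (hTF ▸ hH₁))
  · refine hGF (eq_of_mem_facets_of_subset (hT hFT) (hT hG) fun x hx => ?_).symm
    rcases mem_union.1 (hsub hx) with h | h
    · exact (mem_inter.1 (hdom H₁ hH₁ hne₁ (mem_inter.2 ⟨h, hx⟩))).1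
    · exact (mem_inter.1 (hdom H₂ hH₂ hne₂ (mem_inter.2 ⟨h, hx⟩))).1

theorem HasIntersectionProperty.exists_isExchangeChain {t : ℕ}
    (hip : Δ.HasIntersectionProperty t) (ht : 0 < t) {F G : Finset V} (hF : F ∈ Δ.facets)
    (hG : G ∈ Δ.facets) (hFG : Disjoint F G) :
    ∃ c : ℕ → Finset V, (∀ i ≤ t, c i ∈ Δ.facets) ∧ IsExchangeChain F G t c := by
  have hdist : Δ.dist F G = t := hip.2.2 F hF G hG t ht le_rfl <| by
    rw [disjoint_iff_inter_eq_empty.1 hFG, card_empty, Nat.sub_self]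
  have hchain : Δ.ProperChain F G (Δ.dist F G) := Nat.sInf_mem (hip.2.1 F hF G hG)
  rw [hdist] at hchain
  obtain ⟨c, h0, hct, hfac, hstep⟩ := hchain
  have hcard : ∀ i ≤ t, (c i).card = t := fun i hi => hip.1 _ (hfac i hi)
  refine ⟨c, hfac, isExchangeChain_of_card_sdiff_le_one hFG h0 hct hcard ?_ ?_⟩
  · intro i hi
    have := hstep i hi
    rw [card_sdiff, inter_comm, this, hcard i hi.le, hcard (i + 1) hi]
    omega
  · intro i hi
    have := hstep i hi
    rw [card_sdiff, this, hcard (i + 1) hi]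
    omega

theorem IsForest.false_of_exchangeCycle (hΔ : Δ.IsForest) {n t : ℕ} [NeZero n] (ht : 2 ≤ t)
    {F : ZMod n → Finset V} {c : ZMod n → ℕ → Finset V} (hF : ∀ j, F j ∈ Δ.facets)
    (hcard : ∀ j, (F j).card = t) (hdisj₁ : ∀ j, Disjoint (F j) (F (j + 1)))
    (hdisj₂ : ∀ j, Disjoint (F j) (F (j + 2)))
    (hc : ∀ j, IsExchangeChain (F j) (F (j + 1)) t (c j))
    (hcF : ∀ j, ∀ i ≤ t, c j i ∈ Δ.facets) : False := by
  classical
  set T : Finset (Finset V) := univ.biUnion fun j => (Ioo 0 t).image (c j) ∪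
    if c j (t - 1) ∩ F (j + 1) ≠ c (j + 1) 1 ∩ F (j + 1) then {F (j + 1)} else ∅ with hTdef
  have hmem : ∀ A, A ∈ T ↔ ∃ j, (∃ i ∈ Ioo 0 t, c j i = A) ∨
      (A = F (j + 1) ∧ c j (t - 1) ∩ F (j + 1) ≠ c (j + 1) 1 ∩ F (j + 1)) := by
    intro A
    simp only [hTdef, mem_biUnion, mem_univ, true_and, mem_union, mem_image]
    refine exists_congr fun j => or_congr_right ?_
    split_ifs with h <;> simp [h]
  have hinT : ∀ j, ∀ i ∈ Ioo 0 t, c j i ∈ T := fun j i hi => (hmem _).2 ⟨j, .inl ⟨i, hi, rfl⟩⟩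
  have hjunction : ∀ j, PartCoveredIn T (c j (t - 1)) (F (j + 1)) ∧
      PartCoveredIn T (c (j + 1) 1) (F (j + 1)) := fun j =>
    (hc j).partCoveredIn_junction (hc (j + 1)) ht (hdisj₁ j)
      (by simpa only [add_assoc, one_add_one_eq_two] using hdisj₂ j) (hcard _)
      (hinT _ _ (mem_Ioo.2 ⟨by omega, by omega⟩)) (hinT _ _ (mem_Ioo.2 ⟨one_pos, by omega⟩))
      fun hgood => (hmem _).2 ⟨j, .inr ⟨rfl, hgood⟩⟩
  have hTsub : T ⊆ Δ.facets := by
    intro A hA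
    obtain ⟨j, ⟨i, hi, rfl⟩ | ⟨rfl, -⟩⟩ := (hmem A).1 hA
    · exact hcF j i (mem_Ioo.1 hi).2.le
    · exact hF _
  have hcov : ∀ A ∈ T, CoveredByTwo T A := by
    intro A hA
    obtain ⟨j, ⟨i, hi, rfl⟩ | ⟨rfl, hgood⟩⟩ := (hmem A).1 hA
    · refine (hc j).coveredByTwo (hinT j) ?_ (hjunction j).1 hi
      simpa only [sub_add_cancel] using (hjunction (j - 1)).2
    · exact (hc j).coveredByTwo_junction (hc (j + 1)) ht (hcard _)
        (hinT _ _ (mem_Ioo.2 ⟨by omega, by omega⟩)) (hinT _ _ (mem_Ioo.2 ⟨one_pos, by omega⟩))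
        hgood
  have hT := hΔ.eq_empty_of_forall_coveredByTwo hTsub hcov
  exact notMem_empty _ (hT ▸ hinT 0 1 (mem_Ioo.2 ⟨one_pos, by omega⟩))

theorem IsForest.card_le_two_of_isMatching (hΔ : Δ.IsForest) {t : ℕ} (ht : 2 ≤ t)
    (hip : Δ.HasIntersectionProperty t) {M : Finset (Finset V)} (hM : Δ.IsMatching M) :
    M.card ≤ 2 := by
  by_contra! h3
  obtain ⟨e⟩ : Nonempty (ZMod 3 ↪ M) :=
    Function.Embedding.nonempty_of_card_le (by rw [ZMod.card, Fintype.card_coe]; omega)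
  set F : ZMod 3 → Finset V := fun j => e j
  have hF : ∀ j, F j ∈ Δ.facets := fun j => hM.1 (e j).2
  have hdisj : ∀ i j, i ≠ j → Disjoint (F i) (F j) := fun i j hij =>
    disjoint_iff_inter_eq_empty.2 <|
      hM.2 _ (e i).2 _ (e j).2 fun h => hij (e.injective (Subtype.ext h))
  have hsucc : ∀ j : ZMod 3, j ≠ j + 1 := by decide
  have hsucc₂ : ∀ j : ZMod 3, j ≠ j + 2 := by decide
  choose c hcF hc using fun j =>
    hip.exists_isExchangeChain (by omega) (hF j) (hF (j + 1)) (hdisj _ _ (hsucc j))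
  exact hΔ.false_of_exchangeCycle ht hF (fun j => hip.1 _ (hF j))
    (fun j => hdisj _ _ (hsucc j)) (fun j => hdisj _ _ (hsucc₂ j)) hc hcF

end SimplicialComplex

/-- A simplicial forest with the intersection property whose
facets have cardinality `t ≥ 2` has matching number at most `2`. -/
theorem matchingNumber_le_two_of_intersectionProperty
    {V : Type} [DecidableEq V] (Δ : SimplicialComplex V) (hΔ : Δ.IsForest)
    (t : ℕ) (ht : 2 ≤ t) (hip : Δ.HasIntersectionProperty t) :
    Δ.matchingNumber ≤ 2 :=
  Δ.matchingNumber_le fun _ => hΔ.card_le_two_of_isMatching ht hip
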